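/- Let τ = (1 + √5)/2 and λ_k = (⌈k/τ⌉ + kτ)/τ² for k ∈ ℤ. Then the set of pairs of consecutive gaps { (λ_{k+1} − λ_k, λ_{k+2} − λ_{k+1}) : k ∈ ℤ } equals exactly { (1, 1), (1, 1/τ), (1/τ, 1) }; in particular there is no k with λ_{k+1} − λ_k = 1/τ and λ_{k+2} − λ_{k+1} = 1/τ (no word SS occurs in the Fibonacci chain). -/

import Mathlib

/-!
Write `λ_k = (c_k + kτ)/τ²` with `c_k = ⌈k/τ⌉`. Since `0 < 1/τ < 1`, the increment
`c_{k+1} - c_k` is `0` or `1`, and by `τ² = τ + 1` the gap `λ_{k+1} - λ_k` is then `1/τ` or `1`.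
Two consecutive increments cannot both vanish, because `c_{k+2} - c_k ≥ 1` as `2/τ > 1`.
The three admissible pairs already occur at `k = 0, 1, 2`.
-/

open MeasureTheory Set Filter

noncomputable section

/-- The golden mean `τ = (1 + √5)/2`. -/
def tau : ℝ := (1 + Real.sqrt 5) / 2

/-- The cut-and-project model set `Σ^Ω = { a + bτ : a, b ∈ ℤ, a - b/τ ∈ Ω }`. -/
def SigmaSet (Ω : Set ℝ) : Set ℝ :=
  {x | ∃ a b : ℤ, x = (a : ℝ) + (b : ℝ) * tau ∧ (a : ℝ) - (b : ℝ) / tau ∈ Ω}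

/-- The increasing enumeration `λ_k = (⌈k/τ⌉ + kτ)/τ²` of the rescaled Fibonacci
chain `Σ^{[0,τ²)}`. -/
def fibChain (k : ℤ) : ℝ := ((⌈(k : ℝ) / tau⌉ : ℝ) + (k : ℝ) * tau) / tau ^ 2

section Ceil

variable {R : Type*} [Ring R] [LinearOrder R] [IsStrictOrderedRing R] [FloorRing R]

theorem ceil_add_sub_ceil_eq_zero_or_one (x : R) {a : R} (ha₀ : 0 ≤ a) (ha₁ : a ≤ 1) :
    ⌈x + a⌉ - ⌈x⌉ = 0 ∨ ⌈x + a⌉ - ⌈x⌉ = 1 := by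
  have hlo : ⌈x⌉ ≤ ⌈x + a⌉ := Int.ceil_mono (le_add_of_nonneg_right ha₀)
  have hhi : ⌈x + a⌉ ≤ ⌈x⌉ + 1 :=
    (Int.ceil_mono (add_le_add_right ha₁ x)).trans (Int.ceil_add_one x).le
  omega

theorem ceil_lt_ceil_add (x : R) {a : R} (ha : 1 < a) : ⌈x⌉ < ⌈x + a⌉ :=
  Int.lt_ceil.mpr ((Int.ceil_lt_add_one x).trans (add_lt_add_right ha x))

end Ceil

section GoldenMean

open Real goldenRatio

theorem tau_pos : 0 < tau := goldenRatio_pos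

theorem one_lt_tau : 1 < tau := one_lt_goldenRatio

theorem tau_lt_two : tau < 2 := goldenRatio_lt_two

theorem tau_sq : tau ^ 2 = tau + 1 := goldenRatio_sq

theorem one_div_tau : 1 / tau = tau - 1 := by
  rw [div_eq_iff tau_pos.ne']
  linear_combination -tau_sq

theorem three_halves_lt_tau : 3 / 2 < tau := by
  have : (2 : ℝ) < √5 := by
    rw [Real.lt_sqrt zero_le_two]
    norm_num
  unfold tau
  linarith

end GoldenMean

theorem fibChain_add_sub (k n : ℤ) :
    fibChain (k + n) - fibChain k =
      (((⌈(k : ℝ) / tau + n / tau⌉ - ⌈(k : ℝ) / tau⌉ : ℤ) : ℝ) + n * tau) / tau ^ 2 := by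
  simp only [fibChain, Int.cast_add, add_div, Int.cast_sub]
  ring

theorem fibChain_succ_sub_eq_one_or_one_div_tau (k : ℤ) :
    fibChain (k + 1) - fibChain k = 1 ∨ fibChain (k + 1) - fibChain k = 1 / tau := by
  have hinv₀ : 0 ≤ 1 / tau := one_div_nonneg.mpr tau_pos.le
  have hinv₁ : 1 / tau ≤ 1 := (div_le_one tau_pos).mpr one_lt_tau.le
  have hτ2 : tau ^ 2 ≠ 0 := pow_ne_zero 2 tau_pos.ne'
  rw [fibChain_add_sub, Int.cast_one, one_mul]
  rcases ceil_add_sub_ceil_eq_zero_or_one ((k : ℝ) / tau) hinv₀ hinv₁ with h | h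
  · right
    rw [h, Int.cast_zero, zero_add, div_eq_div_iff hτ2 tau_pos.ne']
    ring
  · left
    rw [h, Int.cast_one, add_comm, ← tau_sq, div_self hτ2]

theorem one_add_one_div_tau_le_fibChain_add_two_sub (k : ℤ) :
    1 + 1 / tau ≤ fibChain (k + 2) - fibChain k := by
  have hstep : (1 : ℝ) ≤ ((⌈(k : ℝ) / tau + 2 / tau⌉ - ⌈(k : ℝ) / tau⌉ : ℤ) : ℝ) := by
    have : 1 < 2 / tau := (one_lt_div tau_pos).mpr tau_lt_two
    have := ceil_lt_ceil_add ((k : ℝ) / tau) this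
    exact_mod_cast (by omega : (1 : ℤ) ≤ ⌈(k : ℝ) / tau + 2 / tau⌉ - ⌈(k : ℝ) / tau⌉)
  have hexp : (1 + 1 / tau) * tau ^ 2 = 1 + 2 * tau := by
    rw [one_div_tau]
    linear_combination (tau + 1) * tau_sq
  rw [fibChain_add_sub, Int.cast_ofNat, le_div_iff₀ (pow_pos tau_pos 2)]
  linarith

theorem not_consecutive_fibChain_gaps_eq_one_div_tau (k : ℤ) :
    ¬(fibChain (k + 1) - fibChain k = 1 / tau ∧ fibChain (k + 2) - fibChain (k + 1) = 1 / tau) := by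
  rintro ⟨h₁, h₂⟩
  have hinv : 1 / tau < 1 := (div_lt_one tau_pos).mpr one_lt_tau
  have := one_add_one_div_tau_le_fibChain_add_two_sub k
  linarith

theorem fibChain_eq_of_lt_of_le {k m : ℤ} (h₁ : (m - 1) * tau < k) (h₂ : (k : ℝ) ≤ m * tau) :
    fibChain k = (m + k * tau) / tau ^ 2 := by
  have hceil : ⌈(k : ℝ) / tau⌉ = m := by
    rw [Int.ceil_eq_iff, lt_div_iff₀ tau_pos, div_le_iff₀ tau_pos]
    exact ⟨h₁, h₂⟩
  rw [fibChain, hceil]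

theorem fibChain_zero_to_four :
    fibChain 0 = 0 ∧ fibChain 1 = 1 ∧ fibChain 2 = 2 ∧ fibChain 3 = 1 + tau ∧
      fibChain 4 = 2 + tau := by
  have h := tau_sq
  have hτ_lo := three_halves_lt_tau
  have hτ_hi := tau_lt_two
  have hτ2 : tau ^ 2 ≠ 0 := pow_ne_zero 2 tau_pos.ne'
  refine ⟨by simp [fibChain], ?_, ?_, ?_, ?_⟩
  · rw [fibChain_eq_of_lt_of_le (m := 1) (by push_cast; linarith) (by push_cast; linarith),
      div_eq_iff hτ2]
    push_cast; linear_combination -h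
  · rw [fibChain_eq_of_lt_of_le (m := 2) (by push_cast; linarith) (by push_cast; linarith),
      div_eq_iff hτ2]
    push_cast; linear_combination -2 * h
  · rw [fibChain_eq_of_lt_of_le (m := 2) (by push_cast; linarith) (by push_cast; linarith),
      div_eq_iff hτ2]
    push_cast; linear_combination -(tau + 2) * h
  · rw [fibChain_eq_of_lt_of_le (m := 3) (by push_cast; linarith) (by push_cast; linarith),
      div_eq_iff hτ2]
    push_cast; linear_combination -(tau + 3) * h

/-- the set of pairs of consecutive gaps of the Fibonacci chain is
exactly `{(1,1), (1,1/τ), (1/τ,1)}`; in particular no word `SS` occurs. -/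
theorem statement10 :
    {p : ℝ × ℝ | ∃ k : ℤ,
        p = (fibChain (k + 1) - fibChain k, fibChain (k + 2) - fibChain (k + 1))} =
      {((1 : ℝ), (1 : ℝ)), ((1 : ℝ), 1 / tau), (1 / tau, (1 : ℝ))} ∧
    ¬∃ k : ℤ, fibChain (k + 1) - fibChain k = 1 / tau ∧
        fibChain (k + 2) - fibChain (k + 1) = 1 / tau := by
  refine ⟨Set.ext fun p => ⟨?_, ?_⟩,
    fun ⟨k, hk⟩ => not_consecutive_fibChain_gaps_eq_one_div_tau k hk⟩
  · rintro ⟨k, rfl⟩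
    have hnext := fibChain_succ_sub_eq_one_or_one_div_tau (k + 1)
    rw [add_assoc, one_add_one_eq_two] at hnext
    rcases fibChain_succ_sub_eq_one_or_one_div_tau k with h₁ | h₁ <;> rcases hnext with h₂ | h₂ <;>
      simp only [h₁, h₂, Set.mem_insert_iff, Set.mem_singleton_iff, Prod.mk.injEq, true_and,
        and_true, true_or, or_true]
    exact (not_consecutive_fibChain_gaps_eq_one_div_tau k ⟨h₁, h₂⟩).elim
  · obtain ⟨h₀, h₁, h₂, h₃, h₄⟩ := fibChain_zero_to_four
    rintro (rfl | rfl | rfl)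
    · exact ⟨0, by norm_num [h₀, h₁, h₂]⟩
    · exact ⟨1, by rw [one_div_tau]; norm_num [h₁, h₂, h₃]; ring⟩
    · exact ⟨2, by rw [one_div_tau]; norm_num [h₂, h₃, h₄]; ring⟩
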